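/- arXiv:2209.11183 — 4 statements merged into one kernel-verified Lean document; each statement's English description precedes it below -/
import Mathlib

section
/- Let z⁽¹⁾,...,z⁽ᵏ⁾ ∈ ℝ^{k−1} be vertices of a regular simplex centered at the origin with ‖z⁽ⁱ⁾‖ = 1 and ⟨z⁽ⁱ⁾,z⁽ʲ⁾⟩ = −1/(k−1) for i ≠ j. If π is a uniformly random permutation in S_k, then for every 1 ≤ ℓ ≤ k, E[(∑_{i=1}^k π(i) z⁽ⁱ⁾)(∑_{j=1}^k π(j) z⁽ʲ⁾)ᵀ] z⁽ˡ⁾ = (k²(k+1)/(12(k−1))) z⁽ˡ⁾. -/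
open Finset
open scoped RealInnerProductSpace

private lemma sum_range_add_one (n : ℕ) :
    ∑ j ∈ Finset.range n, ((j : ℝ) + 1) = n * (n + 1) / 2 := by
  induction n with
  | zero => simp
  | succ n ih => rw [Finset.sum_range_succ, ih]; push_cast; ring

private lemma sum_range_add_one_sq (n : ℕ) :
    ∑ j ∈ Finset.range n, (((j : ℝ) + 1) * ((j : ℝ) + 1)) = n * (n + 1) * (2 * n + 1) / 6 := by
  induction n with
  | zero => simp
  | succ n ih => rw [Finset.sum_range_succ, ih]; push_cast; ring

private lemma perm_sum_const_index {α : Type*} [DecidableEq α] [Fintype α]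
    (f : α → ℝ) (i j : α) :
    ∑ π : Equiv.Perm α, f (π i) = ∑ π : Equiv.Perm α, f (π j) := by
  refine Fintype.sum_equiv (Equiv.mulRight (Equiv.swap i j)) _ _ fun π => ?_
  simp [Equiv.Perm.mul_apply]

private lemma perm_sum_single {α : Type*} [DecidableEq α] [Fintype α]
    (f : α → ℝ) (i : α) :
    (Fintype.card α : ℝ) * ∑ π : Equiv.Perm α, f (π i)
      = (Fintype.card (Equiv.Perm α) : ℝ) * ∑ m, f m := by
  have h1 : ∑ j : α, ∑ π : Equiv.Perm α, f (π j)
      = (Fintype.card α : ℝ) * ∑ π : Equiv.Perm α, f (π i) := by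
    rw [Finset.sum_congr rfl (fun j _ => perm_sum_const_index f j i)]
    simp [Finset.sum_const, nsmul_eq_mul, Finset.card_univ]
  rw [← h1, Finset.sum_comm]
  have h2 : ∀ π : Equiv.Perm α, ∑ j, f (π j) = ∑ m, f m := fun π => Equiv.sum_comp π f
  simp [h2, Finset.sum_const, nsmul_eq_mul, Finset.card_univ]

private lemma perm_sum_pair_index {α : Type*} [DecidableEq α] [Fintype α]
    (f g : α → ℝ) {i j i' j' : α} (hij : i ≠ j) (hij' : i' ≠ j') :
    ∑ π : Equiv.Perm α, f (π i) * g (π j)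
      = ∑ π : Equiv.Perm α, f (π i') * g (π j') := by
  classical
  set τ := Equiv.swap i' i with hτ
  have hτi' : τ i' = i := Equiv.swap_apply_left i' i
  have hτj' : τ j' ≠ i := by
    intro h
    exact hij' (τ.injective (h.trans hτi'.symm)).symm
  set σ := Equiv.swap (τ j') j * τ with hσ
  have hσi : σ i' = i := by
    rw [hσ, Equiv.Perm.mul_apply, hτi']
    exact Equiv.swap_apply_of_ne_of_ne (Ne.symm hτj') hij
  have hσj : σ j' = j := by
    rw [hσ, Equiv.Perm.mul_apply]
    exact Equiv.swap_apply_left _ _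
  refine Fintype.sum_equiv (Equiv.mulRight σ) _ _ fun π => ?_
  simp [Equiv.Perm.mul_apply, hσi, hσj]

private lemma perm_sum_pair {α : Type*} [DecidableEq α] [Fintype α]
    (f g : α → ℝ) {i j : α} (hij : i ≠ j) :
    (Fintype.card α : ℝ) * ((Fintype.card α : ℝ) - 1)
        * ∑ π : Equiv.Perm α, f (π i) * g (π j)
      = (Fintype.card (Equiv.Perm α) : ℝ)
        * ((∑ m, f m) * (∑ m, g m) - ∑ m, f m * g m) := by
  classical
  have hcard1 : 1 ≤ Fintype.card α := Fintype.card_pos_iff.mpr ⟨i⟩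
  have h1 : ∑ a : α, ∑ b ∈ Finset.univ.erase a,
      (∑ π : Equiv.Perm α, f (π a) * g (π b))
      = (Fintype.card α : ℝ) * ((Fintype.card α : ℝ) - 1)
        * ∑ π : Equiv.Perm α, f (π i) * g (π j) := by
    have : ∀ a : α, ∀ b ∈ Finset.univ.erase a,
        (∑ π : Equiv.Perm α, f (π a) * g (π b))
        = ∑ π : Equiv.Perm α, f (π i) * g (π j) := by
      intro a b hb
      exact perm_sum_pair_index f g (Ne.symm (Finset.ne_of_mem_erase hb)) hij
    rw [Finset.sum_congr rfl (fun a _ => Finset.sum_congr rfl (this a))]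
    simp only [Finset.sum_const, nsmul_eq_mul, Finset.card_erase_of_mem (Finset.mem_univ _),
      Finset.card_univ, Nat.cast_sub hcard1]
    push_cast
    ring
  rw [← h1]
  have h2 : ∀ a : α, ∑ b ∈ Finset.univ.erase a,
      (∑ π : Equiv.Perm α, f (π a) * g (π b))
      = ∑ π : Equiv.Perm α, ∑ b ∈ Finset.univ.erase a, f (π a) * g (π b) := by
    intro a; rw [Finset.sum_comm]
  rw [Finset.sum_congr rfl (fun a _ => h2 a), Finset.sum_comm]
  have h3 : ∀ π : Equiv.Perm α,
      ∑ a : α, ∑ b ∈ Finset.univ.erase a, f (π a) * g (π b)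
      = (∑ m, f m) * (∑ m, g m) - ∑ m, f m * g m := by
    intro π
    have hga : ∀ a : α, ∑ b ∈ Finset.univ.erase a, g (π b)
        = (∑ m, g m) - g (π a) := by
      intro a
      have := Finset.sum_erase_add Finset.univ (fun b => g (π b)) (Finset.mem_univ a)
      have hg : ∑ b : α, g (π b) = ∑ m, g m := Equiv.sum_comp π g
      linarith [this, hg]
    have : ∀ a : α, ∑ b ∈ Finset.univ.erase a, f (π a) * g (π b)
        = f (π a) * ((∑ m, g m) - g (π a)) := by
      intro a; rw [← Finset.mul_sum, hga a]
    rw [Finset.sum_congr rfl (fun a _ => this a)]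
    have hf : ∑ a : α, f (π a) = ∑ m, f m := Equiv.sum_comp π f
    have hfg : ∑ a : α, f (π a) * g (π a) = ∑ m, f m * g m :=
      Equiv.sum_comp π (fun m => f m * g m)
    calc ∑ a : α, f (π a) * ((∑ m, g m) - g (π a))
        = (∑ a : α, f (π a)) * (∑ m, g m) - ∑ a : α, f (π a) * g (π a) := by
          have he : ∀ a : α, f (π a) * ((∑ m, g m) - g (π a))
              = f (π a) * (∑ m, g m) - f (π a) * g (π a) := fun a => by ring
          rw [Finset.sum_congr rfl (fun a _ => he a), Finset.sum_sub_distrib,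
            ← Finset.sum_mul]
      _ = (∑ m, f m) * (∑ m, g m) - ∑ m, f m * g m := by rw [hf, hfg]
  rw [Finset.sum_congr rfl (fun π _ => h3 π)]
  simp [Finset.sum_const, Finset.card_univ, nsmul_eq_mul]
  ring

/-- Let `z 1, ..., z k ∈ ℝ^{k-1}` be the vertices of a regular simplex centered at the origin
with `‖z i‖ = 1` and `⟪z i, z j⟫ = -1/(k-1)` for `i ≠ j`.  If `π` is a uniformly random
permutation in `S_k` (with ranks `(π i).val + 1`), then for every `ℓ`,
`E[(∑ᵢ π(i) zⁱ)(∑ⱼ π(j) zʲ)ᵀ] z^ℓ = (k²(k+1)/(12(k-1))) z^ℓ`.  The matrix-vector product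
`(∑ᵢ π(i) zⁱ)(∑ⱼ π(j) zʲ)ᵀ z^ℓ` is written as `⟪∑ⱼ π(j) zʲ, z^ℓ⟫ • (∑ᵢ π(i) zⁱ)`. -/
theorem stmt_1 (k : ℕ) (hk : 2 ≤ k)
    (z : Fin k → EuclideanSpace ℝ (Fin (k - 1)))
    (hsum : ∑ i, z i = 0)
    (hnorm : ∀ i, ‖z i‖ = 1)
    (hinner : ∀ i j, i ≠ j → ⟪z i, z j⟫ = -1 / (k - 1))
    (ℓ : Fin k) :
    ((Nat.factorial k : ℝ))⁻¹ •
      ∑ π : Equiv.Perm (Fin k),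
        (⟪∑ j, (((π j).val + 1 : ℝ)) • z j, z ℓ⟫) • (∑ i, (((π i).val + 1 : ℝ)) • z i)
    = ((k ^ 2 * (k + 1)) / (12 * (k - 1)) : ℝ) • z ℓ := by
  classical
  have hkR : (2:ℝ) ≤ (k:ℝ) := by exact_mod_cast hk
  have hk0 : (k:ℝ) ≠ 0 := by linarith
  have hk1 : (k:ℝ) - 1 ≠ 0 := by linarith
  set K : ℝ := (k:ℝ) with hK
  set N : ℝ := (Nat.factorial k : ℝ) with hN
  have hN0 : N ≠ 0 := Nat.cast_ne_zero.mpr (Nat.factorial_ne_zero k)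
  set F : Fin k → ℝ := fun m => (m.val : ℝ) + 1 with hF
  set S : ℝ := K * (K + 1) / 2 with hS
  set Q : ℝ := K * (K + 1) * (2 * K + 1) / 6 with hQ
  have hSF : ∑ m, F m = S := by
    rw [hF, hS, Fin.sum_univ_eq_sum_range (fun j => ((j:ℝ) + 1))]
    exact sum_range_add_one k
  have hQF : ∑ m, F m * F m = Q := by
    rw [hF, hQ, Fin.sum_univ_eq_sum_range (fun j => ((j:ℝ) + 1) * ((j:ℝ) + 1))]
    exact sum_range_add_one_sq k
  have hcard : (Fintype.card (Fin k) : ℝ) = K := by simp [hK]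
  have hcardP : (Fintype.card (Equiv.Perm (Fin k)) : ℝ) = N := by
    rw [hN]; norm_cast; simp [Fintype.card_perm]
  -- counting facts
  have hP1 : ∀ i : Fin k, ∑ π : Equiv.Perm (Fin k), F (π i) = N * S / K := by
    intro i
    have h := perm_sum_single F i
    rw [hcard, hcardP, hSF] at h
    field_simp
    linarith [h]
  have hP2 : ∑ π : Equiv.Perm (Fin k), F (π ℓ) * F (π ℓ) = N * Q / K := by
    have h := perm_sum_single (fun m => F m * F m) ℓ
    rw [hcard, hcardP, hQF] at h
    field_simp
    simp only [sq]
    linarith [h]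
  have hP3 : ∀ i : Fin k, i ≠ ℓ →
      ∑ π : Equiv.Perm (Fin k), F (π ℓ) * F (π i) = N * (S * S - Q) / (K * (K - 1)) := by
    intro i hi
    have h := perm_sum_pair F F (Ne.symm hi)
    rw [hcard, hcardP, hSF, hQF] at h
    have hKK : K * (K - 1) ≠ 0 := mul_ne_zero hk0 hk1
    field_simp
    linarith [h]
  -- the inner product
  have hip : ∀ π : Equiv.Perm (Fin k),
      ⟪∑ j, F (π j) • z j, z ℓ⟫ = (K * F (π ℓ) - S) / (K - 1) := by
    intro π
    rw [sum_inner]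
    have h1 : ∀ j : Fin k, ⟪F (π j) • z j, z ℓ⟫
        = F (π j) * (if j = ℓ then 1 else -1 / (K - 1)) := by
      intro j
      rw [real_inner_smul_left]
      congr 1
      split
      · rename_i hj
        subst hj
        rw [real_inner_self_eq_norm_mul_norm, hnorm j]; ring
      · rename_i hj
        exact hinner j ℓ hj
    rw [Finset.sum_congr rfl (fun j _ => h1 j)]
    have h2 : ∀ j : Fin k, F (π j) * (if j = ℓ then 1 else -1 / (K - 1))
        = F (π j) * (-1 / (K - 1))
          + (if j = ℓ then F (π j) * (1 - (-1 / (K - 1))) else 0) := by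
      intro j; split <;> ring
    rw [Finset.sum_congr rfl (fun j _ => h2 j), Finset.sum_add_distrib,
      ← Finset.sum_mul, Equiv.sum_comp π F, hSF, Finset.sum_ite_eq' Finset.univ ℓ]
    simp only [Finset.mem_univ, if_true]
    field_simp
    ring
  -- rewrite the LHS
  have hV : ∀ π : Equiv.Perm (Fin k),
      (⟪∑ j, F (π j) • z j, z ℓ⟫) • (∑ i, F (π i) • z i)
      = ∑ i, (((K * F (π ℓ) - S) / (K - 1)) * F (π i)) • z i := by
    intro π
    rw [hip π, Finset.smul_sum]
    exact Finset.sum_congr rfl fun i _ => by rw [smul_smul]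
  rw [show ∑ π : Equiv.Perm (Fin k),
        (⟪∑ j, (((π j).val + 1 : ℝ)) • z j, z ℓ⟫) • (∑ i, (((π i).val + 1 : ℝ)) • z i)
      = ∑ π : Equiv.Perm (Fin k),
        ∑ i, (((K * F (π ℓ) - S) / (K - 1)) * F (π i)) • z i from
    Finset.sum_congr rfl fun π _ => hV π]
  rw [Finset.sum_comm, Finset.smul_sum]
  have hco : ∀ i : Fin k,
      N⁻¹ • ∑ π : Equiv.Perm (Fin k), (((K * F (π ℓ) - S) / (K - 1)) * F (π i)) • z i
      = (N⁻¹ * ∑ π : Equiv.Perm (Fin k), ((K * F (π ℓ) - S) / (K - 1)) * F (π i)) • z i := by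
    intro i
    rw [← Finset.sum_smul, smul_smul]
  rw [Finset.sum_congr rfl fun i _ => hco i]
  -- compute the coefficients
  set βd : ℝ := N⁻¹ * ((K / (K - 1)) * (N * Q / K) - (S / (K - 1)) * (N * S / K)) with hβd
  set βo : ℝ := N⁻¹ * ((K / (K - 1)) * (N * (S * S - Q) / (K * (K - 1)))
      - (S / (K - 1)) * (N * S / K)) with hβo
  have hcoef : ∀ i : Fin k,
      N⁻¹ * ∑ π : Equiv.Perm (Fin k), ((K * F (π ℓ) - S) / (K - 1)) * F (π i)
      = if i = ℓ then βd else βo := by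
    intro i
    have hsplit : ∀ π : Equiv.Perm (Fin k),
        ((K * F (π ℓ) - S) / (K - 1)) * F (π i)
        = (K / (K - 1)) * (F (π ℓ) * F (π i)) - (S / (K - 1)) * F (π i) := by
      intro π; field_simp
    rw [Finset.sum_congr rfl fun π _ => hsplit π, Finset.sum_sub_distrib,
      ← Finset.mul_sum, ← Finset.mul_sum, hP1 i]
    split
    · rename_i hi
      subst hi
      rw [hP2, hβd]
    · rename_i hi
      rw [hP3 i hi, hβo]
  rw [Finset.sum_congr rfl fun i _ => by rw [hcoef i]]
  -- collapse the sum using hsum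
  have hstep : ∀ i : Fin k, (if i = ℓ then βd else βo) • z i
      = βo • z i + (if i = ℓ then (βd - βo) • z ℓ else 0) := by
    intro i
    split
    · rename_i hi; subst hi; rw [← add_smul]; ring_nf
    · simp
  rw [Finset.sum_congr rfl fun i _ => hstep i, Finset.sum_add_distrib,
    ← Finset.smul_sum, hsum, smul_zero, zero_add,
    Finset.sum_ite_eq' Finset.univ ℓ]
  simp only [Finset.mem_univ, if_true]
  -- final scalar identity
  have : βd - βo = (K ^ 2 * (K + 1)) / (12 * (K - 1)) := by
    rw [hβd, hβo, hS, hQ]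
    field_simp
    ring
  rw [this]
end

section
/- With z⁽¹⁾,...,z⁽ᵏ⁾ the unit regular simplex vertices in ℝ^{k−1} and π uniform on S_k, the random vector ∑_{i=1}^k π(i) z⁽ⁱ⁾ has mean zero and covariance matrix (k²(k+1)/(12(k−1))) I, where I is the (k−1)×(k−1) identity. -/
open Finset
open scoped RealInnerProductSpace


lemma sum_fin_real (k : ℕ) : ∑ v : Fin k, ((v:ℝ)+1) = k*(k+1)/2 := by
  induction k with
  | zero => simp
  | succ n ih =>
    rw [Fin.sum_univ_castSucc]
    simp only [Fin.coe_castSucc, Fin.val_last] at *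
    rw [ih]; push_cast; ring

lemma sum_fin_sq_real (k : ℕ) : ∑ v : Fin k, ((v:ℝ)+1)^2 = (k:ℝ)*(k+1)*(2*k+1)/6 := by
  induction k with
  | zero => simp
  | succ n ih =>
    rw [Fin.sum_univ_castSucc]
    simp only [Fin.coe_castSucc, Fin.val_last] at *
    rw [ih]; push_cast; ring

lemma exists_perm_pair {α} [DecidableEq α] {a b c d : α} (hab : a ≠ b) (hcd : c ≠ d) :
    ∃ σ : Equiv.Perm α, σ a = c ∧ σ b = d := by
  refine ⟨(Equiv.swap a c).trans (Equiv.swap ((Equiv.swap a c) b) d), ?_, ?_⟩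
  · have h1 : (Equiv.swap a c) b ≠ c := by
      intro h
      exact hab (Equiv.injective _ (by rw [h, Equiv.swap_apply_left]))
    simp only [Equiv.trans_apply, Equiv.swap_apply_left]
    exact Equiv.swap_apply_of_ne_of_ne (Ne.symm h1) hcd
  · simp [Equiv.trans_apply, Equiv.swap_apply_left]

lemma perm_sum_const1 {k : ℕ} (f : Fin k → ℝ) (i i' : Fin k) :
    ∑ π : Equiv.Perm (Fin k), f (π i) = ∑ π : Equiv.Perm (Fin k), f (π i') := by
  have := Equiv.sum_comp (Equiv.mulRight (Equiv.swap i i'))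
    (fun π : Equiv.Perm (Fin k) => f (π i))
  rw [← this]
  refine Finset.sum_congr rfl fun π _ => ?_
  simp [Equiv.Perm.mul_apply, Equiv.swap_apply_left]

lemma exists_perm_pair' {α} [DecidableEq α] {a b c d : α} (hab : a ≠ b) (hcd : c ≠ d) :
    ∃ σ : Equiv.Perm α, σ a = c ∧ σ b = d := by
  refine ⟨(Equiv.swap a c).trans (Equiv.swap ((Equiv.swap a c) b) d), ?_, ?_⟩
  · have h1 : (Equiv.swap a c) b ≠ c := by
      intro h
      exact hab (Equiv.injective _ (by rw [h, Equiv.swap_apply_left]))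
    simp only [Equiv.trans_apply, Equiv.swap_apply_left]
    exact Equiv.swap_apply_of_ne_of_ne (Ne.symm h1) hcd
  · simp [Equiv.trans_apply, Equiv.swap_apply_left]

lemma perm_sum_const2 {k : ℕ} (g : Fin k → Fin k → ℝ) {i j i' j' : Fin k}
    (hij : i ≠ j) (hij' : i' ≠ j') :
    ∑ π : Equiv.Perm (Fin k), g (π i) (π j) = ∑ π : Equiv.Perm (Fin k), g (π i') (π j') := by
  obtain ⟨σ, h1, h2⟩ := exists_perm_pair' hij' hij
  have := Equiv.sum_comp (Equiv.mulRight σ)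
    (fun π : Equiv.Perm (Fin k) => g (π i') (π j'))
  rw [← this]
  refine Finset.sum_congr rfl fun π _ => ?_
  simp [Equiv.Perm.mul_apply, h1, h2]
lemma frame_lemma (k : ℕ) (hk : 2 ≤ k)
    (z : Fin k → EuclideanSpace ℝ (Fin (k - 1)))
    (hsum : ∑ i, z i = 0)
    (hnorm : ∀ i, ‖z i‖ = 1)
    (hinner : ∀ i j, i ≠ j → ⟪z i, z j⟫ = -1 / (k - 1)) :
    ∀ a b : Fin (k - 1), ∑ i, z i a * z i b
      = ((k:ℝ)/((k:ℝ)-1)) * (if a = b then 1 else 0) := by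
  have hk1 : ((k:ℝ) - 1) ≠ 0 := by
    have : (2:ℝ) ≤ (k:ℝ) := by exact_mod_cast hk
    intro h; linarith
  have hk0 : (k:ℝ) ≠ 0 := by
    have : (2:ℝ) ≤ (k:ℝ) := by exact_mod_cast hk
    intro h; linarith
  -- key identity on the z's
  have key : ∀ j, ∑ i, ⟪z i, z j⟫ • z i = ((k:ℝ)/((k:ℝ)-1)) • z j := by
    intro j
    have hsplit : ∑ i, ⟪z i, z j⟫ • z i
        = ⟪z j, z j⟫ • z j + ∑ i ∈ univ.erase j, ⟪z i, z j⟫ • z i := by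
      rw [← Finset.add_sum_erase _ _ (mem_univ j)]
    have herase : ∑ i ∈ univ.erase j, z i = - z j := by
      have := Finset.add_sum_erase univ z (mem_univ j)
      rw [hsum] at this
      exact eq_neg_of_add_eq_zero_right this
    have h1 : ⟪z j, z j⟫ = (1:ℝ) := by
      rw [real_inner_self_eq_norm_sq, hnorm]; norm_num
    have h2 : ∑ i ∈ univ.erase j, ⟪z i, z j⟫ • z i
        = (-1/((k:ℝ)-1)) • (- z j) := by
      rw [← herase, Finset.smul_sum]
      refine Finset.sum_congr rfl fun i hi => ?_
      rw [hinner i j (Finset.ne_of_mem_erase hi)]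
    rw [hsplit, h1, h2]
    rw [smul_neg, ← sub_eq_add_neg, ← sub_smul]
    congr 1
    field_simp
    ring
  -- linear independence of the first k-1 vectors
  set ι : Fin (k-1) → Fin k := Fin.castLE (Nat.sub_le k 1) with hι
  have hιinj : Function.Injective ι := Fin.castLE_injective _
  have hli : LinearIndependent ℝ (fun m => z (ι m)) := by
    rw [Fintype.linearIndependent_iff]
    intro g hg
    set C : ℝ := ∑ m, g m with hC
    have hgm : ∀ m₀, (k:ℝ) * g m₀ = C := by
      intro m₀
      have h0 : ⟪z (ι m₀), ∑ m, g m • z (ι m)⟫ = 0 := by rw [hg, inner_zero_right]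
      rw [inner_sum] at h0
      simp only [real_inner_smul_right] at h0
      have hsplit : ∑ m, g m * ⟪z (ι m₀), z (ι m)⟫
          = g m₀ * ⟪z (ι m₀), z (ι m₀)⟫
            + ∑ m ∈ univ.erase m₀, g m * ⟪z (ι m₀), z (ι m)⟫ := by
        rw [← Finset.add_sum_erase _ _ (mem_univ m₀)]
      have h1 : ⟪z (ι m₀), z (ι m₀)⟫ = (1:ℝ) := by
        rw [real_inner_self_eq_norm_sq, hnorm]; norm_num
      have h2 : ∑ m ∈ univ.erase m₀, g m * ⟪z (ι m₀), z (ι m)⟫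
          = (C - g m₀) * (-1/((k:ℝ)-1)) := by
        rw [show C - g m₀ = ∑ m ∈ univ.erase m₀, g m by
          rw [hC, ← Finset.add_sum_erase _ _ (mem_univ m₀)]; ring]
        rw [Finset.sum_mul]
        refine Finset.sum_congr rfl fun m hm => ?_
        rw [hinner _ _ (fun h => (Finset.ne_of_mem_erase hm) (hιinj h).symm)]
      rw [hsplit, h1, h2] at h0
      field_simp at h0
      linarith
    have hCsum : (k:ℝ) * C = ((k:ℝ) - 1) * C := by
      have : ∑ m : Fin (k-1), (k:ℝ) * g m = ∑ m : Fin (k-1), C := by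
        exact Finset.sum_congr rfl fun m _ => hgm m
      rw [← Finset.mul_sum, ← hC, Finset.sum_const, card_univ, Fintype.card_fin] at this
      rw [this, nsmul_eq_mul]
      congr 1
      have : (1:ℕ) ≤ k := le_trans one_le_two hk
      push_cast [Nat.cast_sub this]
      ring
    have hC0 : C = 0 := by linarith [hCsum]
    intro m
    have := hgm m
    rw [hC0] at this
    exact by
      have := mul_eq_zero.mp this
      rcases this with h | h
      · exact absurd h hk0
      · exact h
  -- span is everything
  haveI : Nonempty (Fin (k-1)) := ⟨⟨0, by omega⟩⟩
  have hcard : Fintype.card (Fin (k-1)) = Module.finrank ℝ (EuclideanSpace ℝ (Fin (k-1))) := by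
    simp [finrank_euclideanSpace_fin]
  have hspan : Submodule.span ℝ (Set.range fun m => z (ι m)) = ⊤ :=
    hli.span_eq_top_of_card_eq_finrank hcard
  -- linear maps
  set f : EuclideanSpace ℝ (Fin (k-1)) →ₗ[ℝ] EuclideanSpace ℝ (Fin (k-1)) :=
    ∑ i, ((innerSL ℝ (z i)).toLinearMap).smulRight (z i) with hf
  set g : EuclideanSpace ℝ (Fin (k-1)) →ₗ[ℝ] EuclideanSpace ℝ (Fin (k-1)) :=
    ((k:ℝ)/((k:ℝ)-1)) • LinearMap.id with hgdef
  have hfg : f = g := by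
    apply LinearMap.ext_on hspan
    rintro x ⟨m, rfl⟩
    rw [hf, hgdef]
    simp only [LinearMap.sum_apply, LinearMap.smulRight_apply, ContinuousLinearMap.coe_coe,
      innerSL_apply_apply, LinearMap.smul_apply, LinearMap.id_apply]
    exact key (ι m)
  intro a b
  have h := congrArg (fun v => v a) (LinearMap.congr_fun hfg (EuclideanSpace.single b 1))
  simp only [hf, hgdef, LinearMap.sum_apply, LinearMap.smulRight_apply,
    ContinuousLinearMap.coe_coe, innerSL_apply_apply, LinearMap.smul_apply, LinearMap.id_apply] at h
  rw [WithLp.ofLp_sum, Finset.sum_apply] at h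
  simp only [PiLp.smul_apply, smul_eq_mul, EuclideanSpace.inner_single_right,
    EuclideanSpace.single_apply, map_one, one_mul, RCLike.star_def, conj_trivial] at h
  rw [show (∑ i, z i a * z i b) = ∑ i, z i b * z i a by
    exact Finset.sum_congr rfl fun i _ => mul_comm _ _]
  rw [h]

/-- With `z 1, ..., z k` the unit regular simplex vertices in `ℝ^{k-1}` and `π` uniform on
`S_k` (ranks `(π i).val + 1`), the random vector `W(π) = ∑ᵢ π(i) • z i` has mean zero and
covariance matrix `(k²(k+1)/(12(k-1))) I`, stated entrywise in the coordinates of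
`EuclideanSpace ℝ (Fin (k-1))`. -/
theorem stmt_2 (k : ℕ) (hk : 2 ≤ k)
    (z : Fin k → EuclideanSpace ℝ (Fin (k - 1)))
    (hsum : ∑ i, z i = 0)
    (hnorm : ∀ i, ‖z i‖ = 1)
    (hinner : ∀ i j, i ≠ j → ⟪z i, z j⟫ = -1 / (k - 1)) :
    ((Nat.factorial k : ℝ))⁻¹ •
        (∑ π : Equiv.Perm (Fin k), ∑ i, (((π i).val + 1 : ℝ)) • z i) = 0 ∧
    ∀ a b : Fin (k - 1),
      (∑ π : Equiv.Perm (Fin k),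
          ((∑ i, (((π i).val + 1 : ℝ)) • z i) a) * ((∑ j, (((π j).val + 1 : ℝ)) • z j) b))
        / (Nat.factorial k)
      = ((k ^ 2 * (k + 1)) / (12 * (k - 1)) : ℝ) * (if a = b then 1 else 0) := by
  have hk0 : (k:ℝ) ≠ 0 := by
    have : (2:ℝ) ≤ (k:ℝ) := by exact_mod_cast hk
    intro h; linarith
  have hk1 : ((k:ℝ) - 1) ≠ 0 := by
    have : (2:ℝ) ≤ (k:ℝ) := by exact_mod_cast hk
    intro h; linarith
  have hfac : ((k.factorial : ℕ) : ℝ) ≠ 0 := Nat.cast_ne_zero.mpr (Nat.factorial_ne_zero k)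
  have hi₀ : (0:ℕ) < k := by omega
  have hj₀ : (1:ℕ) < k := by omega
  set i₀ : Fin k := ⟨0, hi₀⟩ with hi₀def
  set j₀ : Fin k := ⟨1, hj₀⟩ with hj₀def
  have hij₀ : i₀ ≠ j₀ := Fin.ne_of_val_ne (by norm_num)
  constructor
  · -- mean zero
    have h1 : (∑ π : Equiv.Perm (Fin k), ∑ i, (((π i).val + 1 : ℝ)) • z i)
        = ∑ i, (∑ π : Equiv.Perm (Fin k), (((π i).val + 1 : ℝ))) • z i := by
      rw [Finset.sum_comm]
      exact Finset.sum_congr rfl fun i _ => (Finset.sum_smul).symm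
    have h2 : ∑ i, (∑ π : Equiv.Perm (Fin k), (((π i).val + 1 : ℝ))) • z i
        = (∑ π : Equiv.Perm (Fin k), (((π i₀).val + 1 : ℝ))) • ∑ i, z i := by
      rw [Finset.smul_sum]
      exact Finset.sum_congr rfl fun i _ => by
        rw [perm_sum_const1 (fun v => ((v.val:ℝ) + 1)) i i₀]
    rw [h1, h2, hsum, smul_zero, smul_zero]
  · intro a b
    have hcoord : ∀ (π : Equiv.Perm (Fin k)) (c : Fin (k-1)),
        ((∑ i, (((π i).val + 1 : ℝ)) • z i) c) = ∑ i, (((π i).val + 1 : ℝ)) * z i c := by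
      intro π c
      rw [WithLp.ofLp_sum, Finset.sum_apply]
      exact Finset.sum_congr rfl fun i _ => rfl
    have hy0 : ∑ i, z i b = 0 := by
      have h : (∑ i, z i) b = (0 : EuclideanSpace ℝ (Fin (k-1))) b := by rw [hsum]
      rw [WithLp.ofLp_sum, Finset.sum_apply] at h
      simpa using h
    set P : Fin k → Fin k → ℝ :=
      fun i j => ∑ π : Equiv.Perm (Fin k), (((π i).val + 1 : ℝ)) * (((π j).val + 1 : ℝ)) with hP
    set d : ℝ := P i₀ i₀ with hd
    set c2 : ℝ := P i₀ j₀ with hc2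
    have hdconst : ∀ i, P i i = d :=
      fun i => perm_sum_const1 (fun v => ((v.val:ℝ)+1)*((v.val:ℝ)+1)) i i₀
    have hc2const : ∀ i j, i ≠ j → P i j = c2 :=
      fun i j hij => perm_sum_const2 (fun u v => ((u.val:ℝ)+1)*((v.val:ℝ)+1)) hij hij₀
    set M : ℝ := ∑ i, z i a * z i b with hMdef
    have hM : M = ((k:ℝ)/((k:ℝ)-1)) * (if a = b then 1 else 0) :=
      frame_lemma k hk z hsum hnorm hinner a b
    -- rewrite the numerator
    have hN : (∑ π : Equiv.Perm (Fin k),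
          ((∑ i, (((π i).val + 1 : ℝ)) • z i) a) * ((∑ j, (((π j).val + 1 : ℝ)) • z j) b))
        = ∑ i, ∑ j, P i j * (z i a * z j b) := by
      calc (∑ π : Equiv.Perm (Fin k),
          ((∑ i, (((π i).val + 1 : ℝ)) • z i) a) * ((∑ j, (((π j).val + 1 : ℝ)) • z j) b))
          = ∑ π : Equiv.Perm (Fin k), ∑ i, ∑ j,
              ((((π i).val + 1 : ℝ)) * (((π j).val + 1 : ℝ))) * (z i a * z j b) := by
            refine Finset.sum_congr rfl fun π _ => ?_
            rw [hcoord, hcoord, Finset.sum_mul_sum]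
            exact Finset.sum_congr rfl fun i _ =>
              Finset.sum_congr rfl fun j _ => by ring
        _ = ∑ i, ∑ j, P i j * (z i a * z j b) := by
            rw [Finset.sum_comm]
            refine Finset.sum_congr rfl fun i _ => ?_
            rw [Finset.sum_comm]
            refine Finset.sum_congr rfl fun j _ => ?_
            rw [hP, Finset.sum_mul]
    -- split into diagonal and off-diagonal
    have hsplit : ∑ i, ∑ j, P i j * (z i a * z j b) = (d - c2) * M := by
      have h1 : ∀ i : Fin k, ∑ j, P i j * (z i a * z j b)
          = d * (z i a * z i b) - c2 * (z i a * z i b) := by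
        intro i
        have h3 : ∑ j ∈ Finset.univ.erase i, z j b = - z i b := by
          have := Finset.add_sum_erase Finset.univ (fun j => z j b) (Finset.mem_univ i)
          rw [hy0] at this
          linarith [this]
        calc ∑ j, P i j * (z i a * z j b)
            = P i i * (z i a * z i b)
              + ∑ j ∈ Finset.univ.erase i, P i j * (z i a * z j b) :=
              (Finset.add_sum_erase _ _ (Finset.mem_univ i)).symm
          _ = d * (z i a * z i b) + ∑ j ∈ Finset.univ.erase i, c2 * (z i a * z j b) := by
              rw [hdconst]
              congr 1
              exact Finset.sum_congr rfl fun j hj => by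
                rw [hc2const i j (Finset.ne_of_mem_erase hj).symm]
          _ = d * (z i a * z i b) + c2 * (z i a * ∑ j ∈ Finset.univ.erase i, z j b) := by
              congr 1
              rw [← Finset.mul_sum, ← Finset.mul_sum]
          _ = d * (z i a * z i b) - c2 * (z i a * z i b) := by rw [h3]; ring
      rw [Finset.sum_congr rfl fun i _ => h1 i, Finset.sum_sub_distrib,
        ← Finset.mul_sum, ← Finset.mul_sum, ← hMdef]
      ring
    -- row sums
    have hrowsum : ∀ π : Equiv.Perm (Fin k),
        ∑ i, (((π i).val : ℝ) + 1) = (k:ℝ)*((k:ℝ)+1)/2 := by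
      intro π
      rw [Equiv.sum_comp π (fun v : Fin k => ((v.val:ℝ)+1))]
      exact_mod_cast sum_fin_real k
    have hrowsq : ∀ π : Equiv.Perm (Fin k),
        ∑ i, (((π i).val : ℝ) + 1) * (((π i).val : ℝ) + 1)
          = (k:ℝ)*((k:ℝ)+1)*(2*(k:ℝ)+1)/6 := by
      intro π
      rw [Equiv.sum_comp π (fun v : Fin k => ((v.val:ℝ)+1)*((v.val:ℝ)+1))]
      have := sum_fin_sq_real k
      simp only [pow_two] at this
      exact_mod_cast this
    have hcard : (Fintype.card (Equiv.Perm (Fin k)) : ℝ) = (k.factorial : ℝ) := by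
      rw [Fintype.card_perm, Fintype.card_fin]
    -- value of d
    have hd_val : (k:ℝ) * d = (k.factorial:ℝ) * ((k:ℝ)*((k:ℝ)+1)*(2*(k:ℝ)+1)/6) := by
      have e1 : ∑ i : Fin k, P i i = (k:ℝ) * d := by
        rw [Finset.sum_congr rfl fun i _ => hdconst i, Finset.sum_const, Finset.card_univ,
          Fintype.card_fin, nsmul_eq_mul]
      have e2 : ∑ i : Fin k, P i i = (k.factorial:ℝ) * ((k:ℝ)*((k:ℝ)+1)*(2*(k:ℝ)+1)/6) := by
        rw [hP]
        rw [Finset.sum_comm]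
        rw [Finset.sum_congr rfl fun π _ => hrowsq π, Finset.sum_const, Finset.card_univ,
          nsmul_eq_mul, hcard]
      linarith [e1, e2]
    -- value of c2
    have hc2_val : (k:ℝ) * ((k:ℝ)-1) * c2
        = (k.factorial:ℝ) * (((k:ℝ)*((k:ℝ)+1)/2) * ((k:ℝ)*((k:ℝ)+1)/2)
            - (k:ℝ)*((k:ℝ)+1)*(2*(k:ℝ)+1)/6) := by
      have e1 : ∑ i : Fin k, ∑ j ∈ Finset.univ.erase i, P i j = (k:ℝ) * (((k:ℝ)-1) * c2) := by
        have : ∀ i : Fin k, ∑ j ∈ Finset.univ.erase i, P i j = ((k:ℝ)-1) * c2 := by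
          intro i
          rw [Finset.sum_congr rfl fun j hj => hc2const i j (Finset.ne_of_mem_erase hj).symm,
            Finset.sum_const, Finset.card_erase_of_mem (Finset.mem_univ i), Finset.card_univ,
            Fintype.card_fin, nsmul_eq_mul]
          congr 1
          push_cast [Nat.cast_sub (le_trans one_le_two hk)]
          ring
        rw [Finset.sum_congr rfl fun i _ => this i, Finset.sum_const, Finset.card_univ,
          Fintype.card_fin, nsmul_eq_mul]
      have e2 : ∑ i : Fin k, ∑ j ∈ Finset.univ.erase i, P i j
          = (k.factorial:ℝ) * (((k:ℝ)*((k:ℝ)+1)/2) * ((k:ℝ)*((k:ℝ)+1)/2)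
              - (k:ℝ)*((k:ℝ)+1)*(2*(k:ℝ)+1)/6) := by
        have hswap : ∑ i : Fin k, ∑ j ∈ Finset.univ.erase i, P i j
            = ∑ π : Equiv.Perm (Fin k), ∑ i : Fin k, ∑ j ∈ Finset.univ.erase i,
                (((π i).val + 1 : ℝ)) * (((π j).val + 1 : ℝ)) := by
          calc ∑ i : Fin k, ∑ j ∈ Finset.univ.erase i, P i j
              = ∑ i : Fin k, ∑ π : Equiv.Perm (Fin k), ∑ j ∈ Finset.univ.erase i,
                  (((π i).val + 1 : ℝ)) * (((π j).val + 1 : ℝ)) := by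
                exact Finset.sum_congr rfl fun i _ => Finset.sum_comm
            _ = _ := Finset.sum_comm
        have hoff : ∀ π : Equiv.Perm (Fin k),
            ∑ i : Fin k, ∑ j ∈ Finset.univ.erase i,
                (((π i).val + 1 : ℝ)) * (((π j).val + 1 : ℝ))
              = ((k:ℝ)*((k:ℝ)+1)/2) * ((k:ℝ)*((k:ℝ)+1)/2)
                - (k:ℝ)*((k:ℝ)+1)*(2*(k:ℝ)+1)/6 := by
          intro π
          have herase : ∀ i : Fin k, ∑ j ∈ Finset.univ.erase i, (((π j).val : ℝ) + 1)
              = (k:ℝ)*((k:ℝ)+1)/2 - (((π i).val : ℝ) + 1) := by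
            intro i
            rw [Finset.sum_erase_eq_sub (Finset.mem_univ i), hrowsum]
          calc ∑ i : Fin k, ∑ j ∈ Finset.univ.erase i,
                (((π i).val + 1 : ℝ)) * (((π j).val + 1 : ℝ))
              = ∑ i : Fin k, (((π i).val + 1 : ℝ))
                  * ((k:ℝ)*((k:ℝ)+1)/2 - (((π i).val : ℝ) + 1)) := by
                refine Finset.sum_congr rfl fun i _ => ?_
                rw [← Finset.mul_sum, herase i]
            _ = _ := by
                simp only [mul_sub]
                rw [Finset.sum_sub_distrib, ← Finset.sum_mul, hrowsum, hrowsq]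
        rw [hswap, Finset.sum_congr rfl fun π _ => hoff π, Finset.sum_const,
          Finset.card_univ, nsmul_eq_mul, hcard]
      linarith [e1, e2]
    -- explicit values
    have hd' : d = (k.factorial:ℝ) * (((k:ℝ)+1)*(2*(k:ℝ)+1))/6 := by
      apply mul_left_cancel₀ hk0
      rw [hd_val]; ring
    have hc2' : c2 = (k.factorial:ℝ) * (((k:ℝ)+1)*(3*(k:ℝ)+2))/12 := by
      apply mul_left_cancel₀ (mul_ne_zero hk0 hk1)
      calc ((k:ℝ) * ((k:ℝ)-1)) * c2 = (k:ℝ) * ((k:ℝ)-1) * c2 := by ring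
        _ = _ := by rw [hc2_val]; ring
    rw [hN, hsplit, hM, hd', hc2']
    push_cast
    field_simp
    ring_nf
end

section
/- Let π be uniform on S_k, and let σ ∈ S_k equal π with probability 1−ε and, with probability ε, be uniformly random in S_k independent of π. Then E[(∑_{i} π(i) z⁽ⁱ⁾)(∑_{j} σ(j) z⁽ʲ⁾)ᵀ] = (1−ε)·(k²(k+1)/(12(k−1))) I. -/
open Finset
open scoped RealInnerProductSpace

private lemma eapply_sum {n m : ℕ} (c : Fin n → ℝ) (z : Fin n → EuclideanSpace ℝ (Fin m)) (a : Fin m) :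
    (∑ i, c i • z i) a = ∑ i, c i * z i a := by
  have h := map_sum (EuclideanSpace.proj a (𝕜 := ℝ)) (fun i => c i • z i) univ
  have h0 : EuclideanSpace.proj a (𝕜 := ℝ) (∑ i, c i • z i) = (∑ i, c i • z i) a := rfl
  rw [h0] at h
  rw [h]
  exact Finset.sum_congr rfl fun i _ => rfl

private lemma ezero_sum {n m : ℕ} (z : Fin n → EuclideanSpace ℝ (Fin m)) (h : ∑ i, z i = 0) (a : Fin m) :
    ∑ i, z i a = 0 := by
  have h2 := map_sum (EuclideanSpace.proj a (𝕜 := ℝ)) (fun i => z i) univ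
  rw [h] at h2
  have h0 : (EuclideanSpace.proj a (𝕜 := ℝ)) (0 : EuclideanSpace ℝ (Fin m)) = 0 := map_zero _
  rw [h0] at h2
  exact h2.symm

private lemma perm_single {k : ℕ} (i i' : Fin k) (g : Fin k → ℝ) :
    ∑ π : Equiv.Perm (Fin k), g (π i) = ∑ π : Equiv.Perm (Fin k), g (π i') := by
  refine (Fintype.sum_bijective (fun π : Equiv.Perm (Fin k) => π * Equiv.swap i i')
    (Group.mulRight_bijective _) _ _ ?_).symm
  intro π
  simp [Equiv.Perm.mul_apply]

private lemma perm_pair {k : ℕ} (i j i' j' : Fin k) (hij : i ≠ j) (hij' : i' ≠ j')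
    (g : Fin k → Fin k → ℝ) :
    ∑ π : Equiv.Perm (Fin k), g (π i) (π j) = ∑ π : Equiv.Perm (Fin k), g (π i') (π j') := by
  obtain ⟨e, hei, hej⟩ : ∃ e : Equiv.Perm (Fin k), e i = i' ∧ e j = j' := by
    set σ := Equiv.swap i i' with hσ
    have h1 : σ i = i' := Equiv.swap_apply_left _ _
    have h2 : σ j ≠ i' := by
      intro h; exact hij (σ.injective (h1.symm ▸ h : σ j = σ i)).symm
    refine ⟨Equiv.swap (σ j) j' * σ, ?_, ?_⟩
    · simp only [Equiv.Perm.mul_apply, h1]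
      exact Equiv.swap_apply_of_ne_of_ne (Ne.symm h2) hij'
    · simp only [Equiv.Perm.mul_apply]
      exact Equiv.swap_apply_left _ _
  refine (Fintype.sum_bijective (fun π : Equiv.Perm (Fin k) => π * e)
    (Group.mulRight_bijective _) _ _ ?_).symm
  intro π
  simp [Equiv.Perm.mul_apply, hei, hej]

private lemma sum_lin' (k : ℕ) :
    ∑ m ∈ Finset.range k, ((m : ℝ) + 1) = (k : ℝ) * ((k : ℝ) + 1) / 2 := by
  induction k with
  | zero => simp
  | succ n ih => rw [Finset.sum_range_succ, ih]; push_cast; ring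

private lemma sum_sq' (k : ℕ) :
    ∑ m ∈ Finset.range k, ((m : ℝ) + 1) ^ 2 = (k : ℝ) * ((k : ℝ) + 1) * (2 * (k : ℝ) + 1) / 6 := by
  induction k with
  | zero => simp
  | succ n ih => rw [Finset.sum_range_succ, ih]; push_cast; ring

private lemma frame_id (k : ℕ) (hk : 2 ≤ k) (z : Fin k → EuclideanSpace ℝ (Fin (k-1)))
    (hz0 : ∀ a, ∑ i, z i a = 0)
    (hzn : ∀ i, ∑ a, z i a * z i a = 1)
    (hzij : ∀ i j, i ≠ j → ∑ a, z i a * z j a = -1/((k:ℝ)-1)) :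
    ∀ a b, ∑ i, z i a * z i b = ((k:ℝ)/((k:ℝ)-1)) * (if a = b then 1 else 0) := by
  have hk2 : (2:ℝ) ≤ (k:ℝ) := by exact_mod_cast hk
  have hk1 : ((k:ℝ) - 1) ≠ 0 := by linarith
  have hk0 : (k:ℝ) ≠ 0 := by linarith
  set c : ℝ := (k:ℝ)/((k:ℝ)-1) with hc
  have hcne : c ≠ 0 := div_ne_zero hk0 hk1
  set M : Fin (k-1) → Fin (k-1) → ℝ := fun a b => ∑ i, z i a * z i b with hM
  have hMsym : ∀ a b, M a b = M b a := by
    intro a b; simp only [hM]; exact Finset.sum_congr rfl fun i _ => mul_comm _ _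
  -- M² = c M
  have hMM : ∀ a b, ∑ e, M e a * M e b = c * M a b := by
    intro a b
    have key : ∀ e, M e a * M e b = ∑ i, ∑ j, (z i a * z j b) * (z i e * z j e) := by
      intro e
      simp only [hM]
      rw [Finset.sum_mul_sum]
      exact Finset.sum_congr rfl fun i _ => Finset.sum_congr rfl fun j _ => by ring
    calc ∑ e, M e a * M e b
        = ∑ e, ∑ i, ∑ j, (z i a * z j b) * (z i e * z j e) := Finset.sum_congr rfl fun e _ => key e
      _ = ∑ i, ∑ j, ∑ e, (z i a * z j b) * (z i e * z j e) := by
          rw [Finset.sum_comm]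
          exact Finset.sum_congr rfl fun i _ => Finset.sum_comm
      _ = ∑ i, ∑ j, (z i a * z j b) * (if i = j then 1 else -1/((k:ℝ)-1)) := by
          refine Finset.sum_congr rfl fun i _ => Finset.sum_congr rfl fun j _ => ?_
          rw [← Finset.mul_sum]
          congr 1
          by_cases h : i = j
          · subst h; simp [hzn i]
          · simp [h, hzij i j h]
      _ = ∑ i, ∑ j, ((z i a * z j b) * (if i = j then 1 + 1/((k:ℝ)-1) else 0)
            + (z i a * z j b) * (-1/((k:ℝ)-1))) := by
          refine Finset.sum_congr rfl fun i _ => Finset.sum_congr rfl fun j _ => ?_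
          by_cases h : i = j <;> simp [h] <;> ring
      _ = c * M a b := by
          rw [Finset.sum_congr rfl (fun i _ => Finset.sum_add_distrib), Finset.sum_add_distrib]
          have h1 : ∀ i : Fin k, ∑ j, (z i a * z j b) * (if i = j then 1 + 1/((k:ℝ)-1) else 0)
              = (z i a * z i b) * (1 + 1/((k:ℝ)-1)) := by
            intro i
            rw [Finset.sum_eq_single i]
            · simp
            · intro j _ hj; simp [Ne.symm hj]
            · intro h; exact absurd (Finset.mem_univ i) h
          have h2 : ∀ i : Fin k, ∑ j, (z i a * z j b) * (-1/((k:ℝ)-1))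
              = (z i a * ∑ j, z j b) * (-1/((k:ℝ)-1)) := by
            intro i; rw [← Finset.sum_mul, ← Finset.mul_sum]
          rw [Finset.sum_congr rfl fun i _ => h1 i, Finset.sum_congr rfl fun i _ => h2 i]
          simp only [hz0 b, mul_zero, zero_mul, Finset.sum_const_zero, add_zero]
          rw [← Finset.sum_mul]
          show (M a b) * _ = c * M a b
          rw [hc]
          field_simp
          ring
  -- trace
  have htr : ∑ a, M a a = (k:ℝ) := by
    simp only [hM]
    rw [Finset.sum_comm]
    rw [Finset.sum_congr rfl fun i (_ : i ∈ univ) => hzn i]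
    simp
  -- the projection argument
  set Q : Fin (k-1) → Fin (k-1) → ℝ :=
    fun a b => (if a = b then 1 else 0) - M a b * c⁻¹ with hQdef
  have hQidem : ∀ a b, ∑ e, Q e a * Q e b = Q a b := by
    intro a b
    have expand : ∀ e, Q e a * Q e b =
        (if e = a then (1:ℝ) else 0) * (if e = b then 1 else 0)
        - (if e = a then (1:ℝ) else 0) * (M e b * c⁻¹)
        - (if e = b then (1:ℝ) else 0) * (M e a * c⁻¹)
        + (M e a * M e b) * (c⁻¹ * c⁻¹) := by
      intro e; simp only [hQdef]; ring
    rw [Finset.sum_congr rfl fun e _ => expand e]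
    have h1 : ∑ e, ((if e = a then (1:ℝ) else 0) * (if e = b then 1 else 0))
        = if a = b then 1 else 0 := by
      rw [Finset.sum_eq_single a]
      · simp
      · intro e _ he; simp [he]
      · intro h; exact absurd (Finset.mem_univ a) h
    have h2 : ∑ e, (if e = a then (1:ℝ) else 0) * (M e b * c⁻¹) = M a b * c⁻¹ := by
      rw [Finset.sum_eq_single a]
      · simp
      · intro e _ he; simp [he]
      · intro h; exact absurd (Finset.mem_univ a) h
    have h3 : ∑ e, (if e = b then (1:ℝ) else 0) * (M e a * c⁻¹) = M b a * c⁻¹ := by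
      rw [Finset.sum_eq_single b]
      · simp
      · intro e _ he; simp [he]
      · intro h; exact absurd (Finset.mem_univ b) h
    have h4 : ∑ e, (M e a * M e b) * (c⁻¹ * c⁻¹) = (c * M a b) * (c⁻¹ * c⁻¹) := by
      rw [← Finset.sum_mul, hMM a b]
    simp only [Finset.sum_add_distrib, Finset.sum_sub_distrib, h1, h2, h3, h4]
    rw [hMsym b a]
    simp only [hQdef]
    field_simp
    ring
  have htrQ : ∑ a, Q a a = 0 := by
    have hQaa : ∀ a : Fin (k-1), Q a a = 1 - M a a * c⁻¹ := fun a => by simp [hQdef]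
    rw [Finset.sum_congr rfl fun a (_ : a ∈ univ) => hQaa a, Finset.sum_sub_distrib,
      ← Finset.sum_mul, htr]
    have hcard : ∑ _a : Fin (k-1), (1:ℝ) = (k:ℝ) - 1 := by
      rw [Finset.sum_const, Finset.card_univ, Fintype.card_fin, nsmul_eq_mul, mul_one]
      have h1k : 1 ≤ k := le_trans (by norm_num) hk
      push_cast [h1k]; ring
    rw [hcard, hc]
    field_simp
    ring
  have hQzero : ∀ e a, Q e a = 0 := by
    have hsq : ∑ a, ∑ e, Q e a * Q e a = 0 := by
      rw [Finset.sum_congr rfl fun a (_ : a ∈ univ) => hQidem a a, htrQ]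
    have hall := (Finset.sum_eq_zero_iff_of_nonneg (fun a _ => Finset.sum_nonneg
      (fun e _ => mul_self_nonneg (Q e a)))).mp hsq
    intro e a
    have h2 := (Finset.sum_eq_zero_iff_of_nonneg
      (fun e _ => mul_self_nonneg (Q e a))).mp (hall a (Finset.mem_univ a)) e (Finset.mem_univ e)
    exact mul_self_eq_zero.mp h2
  intro a b
  have h := hQzero a b
  simp only [hQdef, sub_eq_zero] at h
  have hM' : M a b = c * (if a = b then 1 else 0) := by
    rw [h]; field_simp
  show M a b = c * (if a = b then 1 else 0)
  exact hM'

private def fv {k : ℕ} (m : Fin k) : ℝ := (m.val : ℝ) + 1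


/-- Let `π` be uniform on `S_k`, and let `σ` equal `π` with probability `1-ε` and, with
probability `ε`, be a uniformly random permutation independent of `π`.  Then
`E[(∑ᵢ π(i) zⁱ)(∑ⱼ σ(j) zʲ)ᵀ] = (1-ε) (k²(k+1)/(12(k-1))) I`.  The expectation over the
joint law of `(π, σ)` is written as the corresponding mixture: with probability `1-ε` we
average `(π, π)` over uniform `π`, and with probability `ε` we average over independent
uniform `(π, τ)`.  The matrix identity is stated entrywise. -/
theorem stmt_3 (k : ℕ) (hk : 2 ≤ k) (ε : ℝ) (hε : ε ∈ Set.Ioo (0 : ℝ) 1)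
    (z : Fin k → EuclideanSpace ℝ (Fin (k - 1)))
    (hsum : ∑ i, z i = 0)
    (hnorm : ∀ i, ‖z i‖ = 1)
    (hinner : ∀ i j, i ≠ j → ⟪z i, z j⟫ = -1 / (k - 1)) :
    ∀ a b : Fin (k - 1),
      (1 - ε) * (((Nat.factorial k : ℝ))⁻¹ *
          ∑ π : Equiv.Perm (Fin k),
            ((∑ i, (((π i).val + 1 : ℝ)) • z i) a) * ((∑ j, (((π j).val + 1 : ℝ)) • z j) b))
      + ε * (((Nat.factorial k : ℝ) ^ 2)⁻¹ *
          ∑ π : Equiv.Perm (Fin k), ∑ τ : Equiv.Perm (Fin k),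
            ((∑ i, (((π i).val + 1 : ℝ)) • z i) a) * ((∑ j, (((τ j).val + 1 : ℝ)) • z j) b))
      = (1 - ε) * ((k ^ 2 * (k + 1)) / (12 * (k - 1)) : ℝ) * (if a = b then 1 else 0) := by
  
  have hk2 : (2:ℝ) ≤ (k:ℝ) := by exact_mod_cast hk
  have hk1 : ((k:ℝ) - 1) ≠ 0 := by linarith
  have hk0 : (k:ℝ) ≠ 0 := by linarith
  have hfact0 : ((Nat.factorial k : ℝ)) ≠ 0 := by
    exact_mod_cast Nat.factorial_ne_zero k
  -- coordinate versions of the hypotheses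
  have hz0 : ∀ a, ∑ i, z i a = 0 := ezero_sum z hsum
  have hinner_coord : ∀ x y : EuclideanSpace ℝ (Fin (k-1)), ⟪x, y⟫ = ∑ a, x a * y a := by
    intro x y
    simp [PiLp.inner_apply, RCLike.inner_apply, conj_trivial]
    exact Finset.sum_congr rfl fun _ _ => mul_comm _ _
  have hzn : ∀ i, ∑ a, z i a * z i a = 1 := by
    intro i
    rw [← hinner_coord, real_inner_self_eq_norm_mul_norm, hnorm i, mul_one]
  have hzij : ∀ i j, i ≠ j → ∑ a, z i a * z j a = -1/((k:ℝ)-1) := by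
    intro i j h
    rw [← hinner_coord]
    exact hinner i j h
  have hMid := frame_id k hk z hz0 hzn hzij
  -- the two distinguished indices
  have h0k : 0 < k := by omega
  have h1k : 1 < k := by omega
  set i0 : Fin k := ⟨0, h0k⟩ with hi0
  set j0 : Fin k := ⟨1, h1k⟩ with hj0
  have hij0 : i0 ≠ j0 := by simp [hi0, hj0, Fin.ext_iff]
  -- abbreviations
  set S : Fin k → Fin k → ℝ := fun i j => ∑ π : Equiv.Perm (Fin k), fv (π i) * fv (π j) with hS
  set A : ℝ := S i0 i0 with hA
  set B : ℝ := S i0 j0 with hB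
  have hSd : ∀ i, S i i = A := by
    intro i
    exact perm_single i i0 (fun x => fv x * fv x)
  have hSo : ∀ i j, i ≠ j → S i j = B := by
    intro i j h
    exact perm_pair i j i0 j0 h hij0 (fun x y => fv x * fv y)
  have hSsplit : ∀ i j : Fin k, S i j = B + (if i = j then A - B else 0) := by
    intro i j
    by_cases h : i = j
    · subst h; rw [hSd i, if_pos rfl]; ring
    · rw [hSo i j h, if_neg h]; ring
  -- cardinality of the permutation group
  have hcard : ((Finset.univ : Finset (Equiv.Perm (Fin k))).card : ℝ) = (Nat.factorial k : ℝ) := by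
    rw [Finset.card_univ, Fintype.card_perm, Fintype.card_fin]
  -- value of A  :  k * A = k! * Σ (m+1)²
  have hAval : (k:ℝ) * A = (Nat.factorial k : ℝ) *
      ((k : ℝ) * ((k : ℝ) + 1) * (2 * (k : ℝ) + 1) / 6) := by
    have e1 : ∑ i : Fin k, S i i = (k:ℝ) * A := by
      rw [Finset.sum_congr rfl fun i (_ : i ∈ univ) => hSd i, Finset.sum_const,
        Finset.card_univ, Fintype.card_fin, nsmul_eq_mul]
    have e2 : ∑ i : Fin k, S i i =
        ∑ π : Equiv.Perm (Fin k), ∑ i : Fin k, fv (π i) * fv (π i) := by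
      simp only [hS]
      exact Finset.sum_comm
    have e3 : ∀ π : Equiv.Perm (Fin k),
        ∑ i : Fin k, fv (π i) * fv (π i) = ∑ i : Fin k, fv i * fv i := fun π =>
      Equiv.sum_comp π (fun i => fv i * fv i)
    have e4 : ∑ i : Fin k, fv i * fv i
        = (k : ℝ) * ((k : ℝ) + 1) * (2 * (k : ℝ) + 1) / 6 := by
      rw [← sum_sq' k, ← Fin.sum_univ_eq_sum_range (fun m => ((m : ℝ) + 1) ^ 2) k]
      exact Finset.sum_congr rfl fun i _ => by simp [fv]; ring
    rw [← e1, e2, Finset.sum_congr rfl fun π _ => e3 π, Finset.sum_const, nsmul_eq_mul, hcard,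
      e4]
  -- combined value :  k A + k(k-1) B = k! * (Σ (m+1))²
  have hABval : (k:ℝ) * A + (k:ℝ) * ((k:ℝ) - 1) * B
      = (Nat.factorial k : ℝ) * ((k : ℝ) * ((k : ℝ) + 1) / 2) ^ 2 := by
    have e1 : ∑ i : Fin k, ∑ j : Fin k, S i j = (k:ℝ) * A + (k:ℝ) * ((k:ℝ) - 1) * B := by
      have inner : ∀ i : Fin k, ∑ j : Fin k, S i j = (k:ℝ) * B + (A - B) := by
        intro i
        rw [Finset.sum_congr rfl fun j (_ : j ∈ univ) => hSsplit i j, Finset.sum_add_distrib,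
          Finset.sum_const, Finset.card_univ, Fintype.card_fin, nsmul_eq_mul]
        congr 1
        rw [Finset.sum_eq_single i]
        · simp
        · intro j _ hj; simp [Ne.symm hj]
        · intro h; exact absurd (Finset.mem_univ i) h
      rw [Finset.sum_congr rfl fun i (_ : i ∈ univ) => inner i, Finset.sum_const,
        Finset.card_univ, Fintype.card_fin, nsmul_eq_mul]
      ring
    have e2 : ∑ i : Fin k, ∑ j : Fin k, S i j
        = ∑ π : Equiv.Perm (Fin k), (∑ i : Fin k, fv (π i)) * (∑ j : Fin k, fv (π j)) := by
      simp only [hS]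
      refine Eq.symm ?_
      calc ∑ π : Equiv.Perm (Fin k), (∑ i : Fin k, fv (π i)) * (∑ j : Fin k, fv (π j))
          = ∑ π : Equiv.Perm (Fin k), ∑ i : Fin k, ∑ j : Fin k, fv (π i) * fv (π j) :=
            Finset.sum_congr rfl fun π _ => Finset.sum_mul_sum _ _ _ _
        _ = ∑ i : Fin k, ∑ π : Equiv.Perm (Fin k), ∑ j : Fin k, fv (π i) * fv (π j) :=
            Finset.sum_comm
        _ = ∑ i : Fin k, ∑ j : Fin k, ∑ π : Equiv.Perm (Fin k), fv (π i) * fv (π j) :=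
            Finset.sum_congr rfl fun i _ => Finset.sum_comm
    have e3 : ∀ π : Equiv.Perm (Fin k), ∑ i : Fin k, fv (π i) = ∑ i : Fin k, fv i := fun π =>
      Equiv.sum_comp π fv
    have e4 : ∑ i : Fin k, fv i = (k : ℝ) * ((k : ℝ) + 1) / 2 := by
      rw [← sum_lin' k, ← Fin.sum_univ_eq_sum_range (fun m => ((m : ℝ) + 1)) k]
      exact Finset.sum_congr rfl fun i _ => by simp [fv]
    rw [← e1, e2, Finset.sum_congr rfl fun π (_ : π ∈ univ) =>
      (by rw [e3 π, e4, ← sq] :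
        (∑ i : Fin k, fv (π i)) * (∑ j : Fin k, fv (π j)) = ((k : ℝ) * ((k : ℝ) + 1) / 2) ^ 2),
      Finset.sum_const, nsmul_eq_mul, hcard]
  -- A - B
  have hABv : A - B = (Nat.factorial k : ℝ) * ((k:ℝ) * ((k:ℝ) + 1)) / 12 := by
    have hkk : (k:ℝ) * ((k:ℝ) - 1) ≠ 0 := mul_ne_zero hk0 hk1
    apply mul_left_cancel₀ hkk
    linear_combination (k:ℝ) * hAval - hABval
  -- the per-coordinate application lemma
  have happ : ∀ (π : Equiv.Perm (Fin k)) (e : Fin (k-1)),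
      ((∑ i, (((π i).val + 1 : ℝ)) • z i) e) = ∑ i, fv (π i) * z i e := fun π e =>
    eapply_sum (fun i => fv (π i)) z e
  -- first moment is zero
  have hXzero : ∀ e : Fin (k-1),
      ∑ π : Equiv.Perm (Fin k), (∑ i, fv (π i) * z i e) = 0 := by
    intro e
    rw [Finset.sum_comm]
    have h1 : ∀ i : Fin k, ∑ π : Equiv.Perm (Fin k), fv (π i) * z i e
        = (∑ π : Equiv.Perm (Fin k), fv (π i0)) * z i e := by
      intro i
      rw [← Finset.sum_mul]
      congr 1
      exact perm_single i i0 fv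
    rw [Finset.sum_congr rfl fun i (_ : i ∈ univ) => h1 i, ← Finset.mul_sum, hz0 e, mul_zero]
  intro a b
  simp only [happ]
  -- the ε-term vanishes
  have hsecond : ∑ π : Equiv.Perm (Fin k), ∑ τ : Equiv.Perm (Fin k),
      (∑ i, fv (π i) * z i a) * (∑ j, fv (τ j) * z j b) = 0 := by
    have h1 : ∀ π : Equiv.Perm (Fin k), ∑ τ : Equiv.Perm (Fin k),
        (∑ i, fv (π i) * z i a) * (∑ j, fv (τ j) * z j b) = 0 := by
      intro π
      rw [← Finset.mul_sum, hXzero b, mul_zero]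
    rw [Finset.sum_congr rfl fun π (_ : π ∈ univ) => h1 π, Finset.sum_const_zero]
  -- the main term
  have hmain : ∑ π : Equiv.Perm (Fin k),
      (∑ i, fv (π i) * z i a) * (∑ j, fv (π j) * z j b)
      = (A - B) * ∑ i, z i a * z i b := by
    calc ∑ π : Equiv.Perm (Fin k), (∑ i, fv (π i) * z i a) * (∑ j, fv (π j) * z j b)
        = ∑ π : Equiv.Perm (Fin k), ∑ i : Fin k, ∑ j : Fin k,
            (fv (π i) * fv (π j)) * (z i a * z j b) := by
          refine Finset.sum_congr rfl fun π _ => ?_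
          rw [Finset.sum_mul_sum]
          exact Finset.sum_congr rfl fun i _ => Finset.sum_congr rfl fun j _ => by ring
      _ = ∑ i : Fin k, ∑ π : Equiv.Perm (Fin k), ∑ j : Fin k,
            (fv (π i) * fv (π j)) * (z i a * z j b) := Finset.sum_comm
      _ = ∑ i : Fin k, ∑ j : Fin k, ∑ π : Equiv.Perm (Fin k),
            (fv (π i) * fv (π j)) * (z i a * z j b) :=
          Finset.sum_congr rfl fun i _ => Finset.sum_comm
      _ = ∑ i : Fin k, ∑ j : Fin k, S i j * (z i a * z j b) := by
          refine Finset.sum_congr rfl fun i _ => Finset.sum_congr rfl fun j _ => ?_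
          rw [hS, ← Finset.sum_mul]
      _ = ∑ i : Fin k, (A - B) * (z i a * z i b) := by
          refine Finset.sum_congr rfl fun i _ => ?_
          have h1 : ∀ j : Fin k, S i j * (z i a * z j b)
              = B * (z i a * z j b) + (if i = j then (A - B) * (z i a * z j b) else 0) := by
            intro j
            rw [hSsplit i j]
            by_cases h : i = j
            · simp [h]; ring
            · simp [h]
          rw [Finset.sum_congr rfl fun j (_ : j ∈ univ) => h1 j, Finset.sum_add_distrib]
          have h2 : ∑ j : Fin k, B * (z i a * z j b) = 0 := by
            have : ∀ j : Fin k, B * (z i a * z j b) = (B * z i a) * z j b := fun j => by ring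
            rw [Finset.sum_congr rfl fun j (_ : j ∈ univ) => this j, ← Finset.mul_sum, hz0 b,
              mul_zero]
          have h3 : ∑ j : Fin k, (if i = j then (A - B) * (z i a * z j b) else 0)
              = (A - B) * (z i a * z i b) := by
            rw [Finset.sum_eq_single i]
            · simp
            · intro j _ hj; simp [Ne.symm hj]
            · intro h; exact absurd (Finset.mem_univ i) h
          rw [h2, h3, zero_add]
      _ = (A - B) * ∑ i, z i a * z i b := by rw [← Finset.mul_sum]
  rw [hmain, hsecond, hMid a b, hABv]
  field_simp
  ring
end

section
/- The Borda count function equals the plurality function applied to the vector of pairwise comparisons: for x ∈ S_k^n, defining ω^{(ℓ)}_{\{i,j\}} := j if x_ℓ(j) > x_ℓ(i) and := i otherwise (for each unordered pair {i,j} and voter ℓ), one has Bor_{k,n}(x) = Plur_{k, n·C(k,2)}(ω) where ω = (ω^{(1)},...,ω^{(n)}) ∈ {1,...,k}^{n·C(k,2)}. -/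
open Finset
open scoped Classical

/-- The plurality function for `k` candidates with ballot coordinates indexed by a finite
type `ι`: it elects `e_j` if candidate `j` receives strictly more coordinates than every
other candidate, and outputs the uniform distribution `(1/k) ∑ eᵢ` otherwise. -/
noncomputable def Plur {ι : Type*} [Fintype ι] (k : ℕ) (ω : ι → Fin k) : Fin k → ℝ :=
  if h : ∃ j, ∀ r, r ≠ j →
      (univ.filter fun ℓ => ω ℓ = r).card < (univ.filter fun ℓ => ω ℓ = j).card then
    Pi.single h.choose 1
  else fun _ => 1 / k

/-- The Borda count function: a ballot of voter `ℓ` is a permutation `x ℓ ∈ S_k`, assigning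
rank `(x ℓ) i` to candidate `i` (higher rank preferred).  Candidate `j` wins outright if its
total rank strictly exceeds that of every other candidate; otherwise the output is the
uniform distribution. -/
noncomputable def Bor (k n : ℕ) (x : Fin n → Equiv.Perm (Fin k)) : Fin k → ℝ :=
  if h : ∃ j, ∀ r, r ≠ j → (∑ ℓ, ((x ℓ) r).val) < ∑ ℓ, ((x ℓ) j).val then
    Pi.single h.choose 1
  else fun _ => 1 / k

private lemma analysis (k : ℕ) (σ : Equiv.Perm (Fin k)) (j : Fin k)
    (p : {p : Fin k × Fin k // p.1 < p.2})
    (hp : (if σ p.val.1 < σ p.val.2 then p.val.2 else p.val.1) = j) :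
    σ (if p.val.1 = j then p.val.2 else p.val.1) < σ j ∧
      (p.val = ((if p.val.1 = j then p.val.2 else p.val.1), j) ∨
       p.val = (j, (if p.val.1 = j then p.val.2 else p.val.1))) := by
  obtain ⟨⟨a, b⟩, hab⟩ := p
  simp only at hp ⊢
  by_cases hcmp : σ a < σ b
  · rw [if_pos hcmp] at hp; subst hp
    rw [if_neg (ne_of_lt hab)]
    exact ⟨hcmp, Or.inl rfl⟩
  · rw [if_neg hcmp] at hp; subst hp
    rw [if_pos rfl]
    refine ⟨lt_of_le_of_ne (not_lt.mp hcmp) (fun h => (ne_of_lt hab) (σ.injective h).symm),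
      Or.inr rfl⟩

lemma voter_count (k : ℕ) (σ : Equiv.Perm (Fin k)) (j : Fin k) :
    (univ.filter fun p : {p : Fin k × Fin k // p.1 < p.2} =>
      (if σ p.val.1 < σ p.val.2 then p.val.2 else p.val.1) = j).card = (σ j).val := by
  have h1 : (univ.filter fun p : {p : Fin k × Fin k // p.1 < p.2} =>
      (if σ p.val.1 < σ p.val.2 then p.val.2 else p.val.1) = j).card
      = (univ.filter fun i : Fin k => σ i < σ j).card := by
    refine Finset.card_bij
      (fun p _ => if p.val.1 = j then p.val.2 else p.val.1) ?_ ?_ ?_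
    · intro p hp
      simp only [mem_filter, mem_univ, true_and] at hp ⊢
      exact (analysis k σ j p hp).1
    · intro p1 hp1 p2 hp2 he
      simp only [mem_filter, mem_univ, true_and] at hp1 hp2
      have he' : (if (p1.val).1 = j then (p1.val).2 else (p1.val).1)
          = (if (p2.val).1 = j then (p2.val).2 else (p2.val).1) := he
      obtain ⟨hl1, hd1⟩ := analysis k σ j p1 hp1
      obtain ⟨hl2, hd2⟩ := analysis k σ j p2 hp2
      have q1 := p1.property
      have q2 := p2.property
      apply Subtype.ext
      rcases hd1 with h1 | h1 <;> rcases hd2 with h2 | h2 <;>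
          rw [h1] at q1 ⊢ <;> rw [h2] at q2 ⊢ <;> simp only at q1 q2
      · rw [he']
      · exact absurd (he' ▸ q1) (asymm q2)
      · exact absurd (he' ▸ q2) (asymm q1)
      · rw [he']
    · intro i hi
      simp only [mem_filter, mem_univ, true_and] at hi
      have hne : i ≠ j := fun he => absurd (he ▸ hi) (lt_irrefl _)
      rcases lt_or_gt_of_ne hne with h | h
      · refine ⟨⟨(i, j), h⟩, ?_, ?_⟩
        · simp only [mem_filter, mem_univ, true_and, if_pos hi]
        · simp only [if_neg hne]
      · refine ⟨⟨(j, i), h⟩, ?_, ?_⟩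
        · simp only [mem_filter, mem_univ, true_and, if_neg (asymm hi)]
        · simp
  rw [h1]
  have h2 : (univ.filter fun i : Fin k => σ i < σ j).card
      = (univ.filter fun v : Fin k => v < σ j).card := by
    refine Finset.card_nbij (fun i => σ i) ?_ ?_ ?_
    · intro i hi
      simp only [coe_filter, mem_filter, mem_univ, true_and, Set.mem_setOf_eq] at hi ⊢
      exact hi
    · intro a _ b _ h; exact σ.injective h
    · intro v hv
      simp only [coe_filter, mem_univ, true_and, Set.mem_setOf_eq] at hv
      exact ⟨σ.symm v, by simp [hv], by simp⟩
  rw [h2]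
  have : (univ.filter fun v : Fin k => v < σ j) = Finset.Iio (σ j) := by
    ext v; simp [Finset.mem_Iio]
  rw [this, Fin.card_Iio]

private lemma uniq_max {k : ℕ} (f : Fin k → ℕ) {j j' : Fin k}
    (hj : ∀ r, r ≠ j → f r < f j) (hj' : ∀ r, r ≠ j' → f r < f j') : j = j' := by
  by_contra h
  exact absurd (hj j' (Ne.symm h)) (not_lt.mpr (le_of_lt (hj' j h)))


/-- Borda count equals plurality applied to the vector of pairwise comparisons: for each
voter `ℓ` and each unordered pair `{i,j}` (with `i < j`), the comparison
`ω^{(ℓ)}_{i,j} := j` if voter `ℓ` ranks `j` above `i`, and `:= i` otherwise; the resulting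
vector `ω` has `n·C(k,2)` coordinates. -/
theorem stmt_11 (k n : ℕ) (x : Fin n → Equiv.Perm (Fin k)) :
    Bor k n x =
      Plur k (fun q : Fin n × {p : Fin k × Fin k // p.1 < p.2} =>
        if (x q.1) q.2.val.1 < (x q.1) q.2.val.2 then q.2.val.2 else q.2.val.1) := by
  set ω := fun q : Fin n × {p : Fin k × Fin k // p.1 < p.2} =>
    if (x q.1) q.2.val.1 < (x q.1) q.2.val.2 then q.2.val.2 else q.2.val.1 with hω
  have hcount : ∀ j : Fin k,
      (univ.filter fun q => ω q = j).card = ∑ ℓ, ((x ℓ) j).val := by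
    intro j
    rw [Finset.card_filter]
    rw [Fintype.sum_prod_type]
    refine Finset.sum_congr rfl fun ℓ _ => ?_
    rw [← Finset.card_filter]
    exact voter_count k (x ℓ) j
  have hiff : (∃ j, ∀ r, r ≠ j → (∑ ℓ, ((x ℓ) r).val) < ∑ ℓ, ((x ℓ) j).val) ↔
      (∃ j, ∀ r, r ≠ j →
        (univ.filter fun ℓ => ω ℓ = r).card < (univ.filter fun ℓ => ω ℓ = j).card) := by
    simp only [hcount]
  unfold Bor Plur
  by_cases h : ∃ j, ∀ r, r ≠ j → (∑ ℓ, ((x ℓ) r).val) < ∑ ℓ, ((x ℓ) j).val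
  · have h2 := hiff.mp h
    rw [dif_pos h, dif_pos h2]
    have : h.choose = h2.choose := by
      refine uniq_max (fun j => ∑ ℓ, ((x ℓ) j).val) h.choose_spec ?_
      intro r hr
      have := h2.choose_spec r hr
      rwa [hcount, hcount] at this
    rw [this]
  · rw [dif_neg h, dif_neg (fun hc => h (hiff.mpr hc))]
end
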